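/- If d(s) = exp(sG) is strictly monotone with respect to ‖x‖ = √(xᵀPx) and ‖z‖_d ≤ ε‖y‖_d with 0 < ε ≤ 1, then ⌊d(ln(‖z‖_d/(ε‖y‖_d)))⌋ ≤ ‖d(-ln(ε‖y‖_d))z‖ ≤ 1 for y, z ≠ 0; conversely, if ‖d(-ln(ε‖y‖_d))z‖ ≤ 1 then ‖z‖_d ≤ ε‖y‖_d. -/

import Mathlib

open Matrix NormedSpace

noncomputable def dil {n : ℕ} (G : Matrix (Fin n) (Fin n) ℝ) (s : ℝ) :
    Matrix (Fin n) (Fin n) ℝ :=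
  NormedSpace.exp (s • G)

noncomputable def wnorm {n : ℕ} (P : Matrix (Fin n) (Fin n) ℝ) (x : Fin n → ℝ) : ℝ :=
  Real.sqrt (x ⬝ᵥ P.mulVec x)

/-- `⌊d(s)⌋ = inf_{‖u‖=1} ‖d(s)u‖`. -/
noncomputable def dinf {n : ℕ} (P G : Matrix (Fin n) (Fin n) ℝ) (s : ℝ) : ℝ :=
  sInf {r : ℝ | ∃ u : Fin n → ℝ, wnorm P u = 1 ∧ r = wnorm P (dil G s *ᵥ u)}

/-!
Write `q(s) = (d(s)u)ᵀ P (d(s)u)`. Its derivative is `(d(s)u)ᵀ (PG + GᵀP) (d(s)u) > 0`, so `q`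
is strictly increasing and `‖d(t)u‖ ≤ 1 = ‖u‖ ↔ t ≤ 0` on the unit sphere. The homogeneous norm
gives the unit vector `u = d(-ln ‖z‖_d) z`, and `d(-ln(ε‖y‖_d)) z = d(t) u` with
`t = ln(‖z‖_d / (ε‖y‖_d))`, which is `≤ 0` exactly when `‖z‖_d ≤ ε‖y‖_d`. The lower bound by
`⌊d(t)⌋` holds because `u` is one of the competitors in the infimum.
-/

attribute [local instance] Matrix.linftyOpNormedRing Matrix.linftyOpNormedAlgebra

section Calculus

variable {ι κ : Type*} [Fintype ι] [Fintype κ] {f g : ℝ → ι → ℝ} {f' g' : ι → ℝ} {s : ℝ}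

theorem HasDerivAt.dotProduct (hf : HasDerivAt f f' s) (hg : HasDerivAt g g' s) :
    HasDerivAt (fun t => f t ⬝ᵥ g t) (f' ⬝ᵥ g s + f s ⬝ᵥ g') s := by
  rw [hasDerivAt_pi] at hf hg
  unfold _root_.dotProduct
  rw [← Finset.sum_add_distrib]
  exact HasDerivAt.fun_sum fun i _ => (hf i).mul (hg i)

theorem HasDerivAt.matrix_mulVec (A : Matrix κ ι ℝ) (hf : HasDerivAt f f' s) :
    HasDerivAt (fun t => A *ᵥ f t) (A *ᵥ f') s :=
  (LinearMap.toContinuousLinearMap (Matrix.mulVecLin A)).hasFDerivAt.comp_hasDerivAt s hf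

end Calculus

section Dilation

variable {n : ℕ} (G : Matrix (Fin n) (Fin n) ℝ)

theorem dil_add (a b : ℝ) : dil G (a + b) = dil G a * dil G b := by
  rw [dil, add_smul]
  exact NormedSpace.exp_add_of_commute (((Commute.refl G).smul_left a).smul_right b)

theorem dil_zero : dil G 0 = 1 := by simp [dil]

theorem dil_mulVec_dil_mulVec (a b : ℝ) (x : Fin n → ℝ) :
    dil G a *ᵥ (dil G b *ᵥ x) = dil G (a + b) *ᵥ x := by
  rw [mulVec_mulVec, dil_add]

theorem dil_mulVec_ne_zero {x : Fin n → ℝ} (hx : x ≠ 0) (s : ℝ) : dil G s *ᵥ x ≠ 0 := by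
  intro h
  apply hx
  simpa [mulVec_mulVec, ← dil_add, dil_zero] using congrArg (dil G (-s) *ᵥ ·) h

theorem hasDerivAt_dil_mulVec (x : Fin n → ℝ) (s : ℝ) :
    HasDerivAt (fun t => dil G t *ᵥ x) (G *ᵥ (dil G s *ᵥ x)) s := by
  let evalAt : Matrix (Fin n) (Fin n) ℝ →L[ℝ] (Fin n → ℝ) :=
    LinearMap.toContinuousLinearMap
      { toFun := fun A => A *ᵥ x
        map_add' := fun A B => add_mulVec A B x
        map_smul' := fun c A => smul_mulVec c A x }
  rw [mulVec_mulVec]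
  exact evalAt.hasFDerivAt.comp_hasDerivAt s (hasDerivAt_exp_smul_const' G s)

theorem hasDerivAt_dil_quadForm (P : Matrix (Fin n) (Fin n) ℝ) (x : Fin n → ℝ) (s : ℝ) :
    HasDerivAt (fun t => dil G t *ᵥ x ⬝ᵥ P *ᵥ (dil G t *ᵥ x))
      (dil G s *ᵥ x ⬝ᵥ (P * G + Gᵀ * P) *ᵥ (dil G s *ᵥ x)) s := by
  have hv := hasDerivAt_dil_mulVec G x s
  convert hv.dotProduct (hv.matrix_mulVec P) using 1
  set v := dil G s *ᵥ x
  rw [add_mulVec, dotProduct_add, ← mulVec_mulVec, ← mulVec_mulVec, dotProduct_mulVec v Gᵀ,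
    vecMul_transpose, add_comm]

theorem dil_quadForm_strictMono {P : Matrix (Fin n) (Fin n) ℝ} (hmon : (P * G + Gᵀ * P).PosDef)
    {x : Fin n → ℝ} (hx : x ≠ 0) :
    StrictMono fun t => dil G t *ᵥ x ⬝ᵥ P *ᵥ (dil G t *ᵥ x) :=
  strictMono_of_deriv_pos fun s => by
    rw [(hasDerivAt_dil_quadForm G P x s).deriv]
    exact hmon.dotProduct_mulVec_pos (dil_mulVec_ne_zero G hx s)

theorem wnorm_dil_le_one_iff {P : Matrix (Fin n) (Fin n) ℝ} (hmon : (P * G + Gᵀ * P).PosDef)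
    {u : Fin n → ℝ} (hu : wnorm P u = 1) (t : ℝ) :
    wnorm P (dil G t *ᵥ u) ≤ 1 ↔ t ≤ 0 := by
  have hq0 : u ⬝ᵥ P *ᵥ u = 1 := Real.sqrt_eq_one.mp hu
  have hu0 : u ≠ 0 := by
    rintro rfl
    simp at hq0
  have hq := (dil_quadForm_strictMono G hmon hu0).le_iff_le (a := t) (b := 0)
  simp only [dil_zero, one_mulVec, hq0] at hq
  rw [wnorm, Real.sqrt_le_one, hq]

theorem dinf_le_wnorm_dil_mulVec (P : Matrix (Fin n) (Fin n) ℝ) {u : Fin n → ℝ}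
    (hu : wnorm P u = 1) (s : ℝ) : dinf P G s ≤ wnorm P (dil G s *ᵥ u) :=
  csInf_le ⟨0, fun _ ⟨_, _, hr⟩ => hr ▸ Real.sqrt_nonneg _⟩ ⟨u, hu, rfl⟩

end Dilation

theorem stmt19_general {n : ℕ} (P G : Matrix (Fin n) (Fin n) ℝ)
    (hmon : (P * G + Gᵀ * P).PosDef)
    (hnd : (Fin n → ℝ) → ℝ)
    (hndpos : ∀ x : Fin n → ℝ, x ≠ 0 → 0 < hnd x)
    (hnddef : ∀ x : Fin n → ℝ, x ≠ 0 → wnorm P (dil G (-(Real.log (hnd x))) *ᵥ x) = 1)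
    (ε : ℝ) (hε0 : 0 < ε) :
    ∀ z y : Fin n → ℝ, z ≠ 0 → y ≠ 0 →
      (hnd z ≤ ε * hnd y →
        dinf P G (Real.log (hnd z / (ε * hnd y))) ≤
          wnorm P (dil G (-(Real.log (ε * hnd y))) *ᵥ z) ∧
        wnorm P (dil G (-(Real.log (ε * hnd y))) *ᵥ z) ≤ 1) ∧
      (wnorm P (dil G (-(Real.log (ε * hnd y))) *ᵥ z) ≤ 1 → hnd z ≤ ε * hnd y) := by
  intro z y hz hy
  have ha := hndpos z hz
  have hc := mul_pos hε0 (hndpos y hy)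
  set u := dil G (-Real.log (hnd z)) *ᵥ z
  have hu : wnorm P u = 1 := hnddef z hz
  have hzu :
      dil G (-Real.log (ε * hnd y)) *ᵥ z = dil G (Real.log (hnd z / (ε * hnd y))) *ᵥ u := by
    rw [dil_mulVec_dil_mulVec, Real.log_div ha.ne' hc.ne']
    ring_nf
  have hlog : Real.log (hnd z / (ε * hnd y)) ≤ 0 ↔ hnd z ≤ ε * hnd y := by
    rw [Real.log_nonpos_iff (div_pos ha hc).le, div_le_one hc]
  rw [hzu, wnorm_dil_le_one_iff G hmon hu, hlog]
  exact ⟨fun hle => ⟨dinf_le_wnorm_dil_mulVec G P hu _, hle⟩, id⟩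

/-- if `‖z‖_d ≤ ε‖y‖_d` with `0 < ε ≤ 1` then
`⌊d(ln(‖z‖_d/(ε‖y‖_d)))⌋ ≤ ‖d(-ln(ε‖y‖_d))z‖ ≤ 1` for `y, z ≠ 0`; conversely,
`‖d(-ln(ε‖y‖_d))z‖ ≤ 1` implies `‖z‖_d ≤ ε‖y‖_d`. -/
theorem stmt19 {n : ℕ} (P G : Matrix (Fin n) (Fin n) ℝ) (hP : P.PosDef)
    (hmon : (P * G + Gᵀ * P).PosDef)
    (hnd : (Fin n → ℝ) → ℝ) (hnd0 : hnd 0 = 0)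
    (hndpos : ∀ x : Fin n → ℝ, x ≠ 0 → 0 < hnd x)
    (hnddef : ∀ x : Fin n → ℝ, x ≠ 0 → wnorm P (dil G (-(Real.log (hnd x))) *ᵥ x) = 1)
    (ε : ℝ) (hε0 : 0 < ε) (hε1 : ε ≤ 1) :
    ∀ z y : Fin n → ℝ, z ≠ 0 → y ≠ 0 →
      (hnd z ≤ ε * hnd y →
        dinf P G (Real.log (hnd z / (ε * hnd y))) ≤
          wnorm P (dil G (-(Real.log (ε * hnd y))) *ᵥ z) ∧
        wnorm P (dil G (-(Real.log (ε * hnd y))) *ᵥ z) ≤ 1) ∧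
      (wnorm P (dil G (-(Real.log (ε * hnd y))) *ᵥ z) ≤ 1 → hnd z ≤ ε * hnd y) :=
  stmt19_general P G hmon hnd hndpos hnddef ε hε0
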